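/- For every t ∈ ℝ \ Γ(1/8), there exists γ ∈ Γ(1/8) such that t − γ ∉ Z_{3/8} = { (2ℓ+1)·8^k/(4·3^k) : ℓ ∈ ℤ, k ≥ 1 }. That is, the orthogonal family {e_γ : γ ∈ Γ(1/8)} is maximally orthogonal in L²(μ_{3/8}). -/

import Mathlib

/-!
Every element of `Z38` has the form `m 2^(3k+1) / 3^(k+1)` with `m` odd, so `γ = 0` works unless
`t = u / 3^j` in lowest terms. Then `t - γ = (u - 3^j γ) / 3^j` is still in lowest terms for
`j ≥ 1`, and it lies in `Z38` only if the 2-adic valuation of `u - 3^j γ` is `≡ 1 mod 3` and at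
least `3j - 2`. For `j ≥ 2` this forces `4 ∣ u - 3^j γ`, which fails for `γ = 0` or `γ = 2`.
For `j ≤ 1` put `c = 3^j` and choose the base-8 digits `d ∈ {0, 2}` of `γ` greedily: either
`u - c d` has 2-adic valuation `0`, `2` or `∞`, or `8 ∣ u - c d` and one continues with
`(u - c d) / 8`, which is smaller than `u` in absolute value because `|c| < 7`.
-/

/-- The set `Γ(1/8)` of finite sums `∑ aₖ 8^k` with digits `aₖ ∈ {0,2}`. -/
def Gamma8 : Set ℝ :=
  {x | ∃ (N : ℕ) (a : ℕ → ℝ), (∀ k, a k = 0 ∨ a k = 2) ∧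
    x = ∑ k ∈ Finset.range N, a k * 8 ^ k}

/-- The zero set `Z_{3/8} = { (2ℓ+1) 8^k / (4 · 3^k) : ℓ ∈ ℤ, k ≥ 1 }`. -/
def Z38 : Set ℝ :=
  {t | ∃ (k : ℕ) (l : ℤ), 1 ≤ k ∧ t = (2 * l + 1) * 8 ^ k / (4 * 3 ^ k)}

theorem zero_mem_Gamma8 : (0 : ℝ) ∈ Gamma8 :=
  ⟨0, fun _ => 0, fun _ => Or.inl rfl, by simp⟩

theorem add_eight_mul_mem_Gamma8 {d x : ℝ} (hd : d = 0 ∨ d = 2) (hx : x ∈ Gamma8) :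
    d + 8 * x ∈ Gamma8 := by
  obtain ⟨N, a, ha, rfl⟩ := hx
  refine ⟨N + 1, fun k => Nat.casesOn k d a, fun k => ?_, ?_⟩
  · cases k with
    | zero => exact hd
    | succ k => exact ha k
  · rw [Finset.sum_range_succ', Finset.mul_sum, add_comm]
    congr 1
    · exact Finset.sum_congr rfl fun k _ => by ring
    · simp

theorem exists_of_mem_Z38 {t : ℝ} (ht : t ∈ Z38) :
    ∃ (k : ℕ) (m : ℤ), Odd m ∧ t = ((m * 2 ^ (3 * k + 1) : ℤ) : ℝ) / 3 ^ (k + 1) := by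
  obtain ⟨_ | k, l, hk, rfl⟩ := ht
  · omega
  refine ⟨k, 2 * l + 1, odd_two_mul_add_one l, ?_⟩
  have h8 : (8 : ℝ) ^ (k + 1) = 4 * 2 ^ (3 * k + 1) := by
    rw [show (8 : ℝ) = 2 ^ 3 by norm_num, ← pow_mul]
    rw [show 3 * (k + 1) = 3 * k + 1 + 2 by ring, pow_add]
    ring
  push_cast
  rw [h8]
  field_simp

theorem exists_div_pow_three_eq_and_not_three_dvd (j : ℕ) (u : ℤ) :
    ∃ (j' : ℕ) (u' : ℤ), (u : ℝ) / 3 ^ j = u' / 3 ^ j' ∧ (j' = 0 ∨ ¬ 3 ∣ u') := by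
  induction j generalizing u with
  | zero => exact ⟨0, u, rfl, Or.inl rfl⟩
  | succ j ih =>
    by_cases h3 : (3 : ℤ) ∣ u
    · obtain ⟨v, rfl⟩ := h3
      obtain ⟨j', u', heq, hred⟩ := ih v
      refine ⟨j', u', ?_, hred⟩
      rw [← heq, pow_succ]
      push_cast
      field_simp
    · exact ⟨j + 1, u, rfl, Or.inr h3⟩

theorem exists_eq_add_and_eq_mul_pow_three {w n : ℤ} {i j : ℕ} (hw : j = 0 ∨ ¬ 3 ∣ w)
    (h : w * 3 ^ i = n * 3 ^ j) : ∃ s, i = j + s ∧ n = w * 3 ^ s := by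
  have h3 : (3 : ℤ) ^ j ≠ 0 := by positivity
  obtain ⟨s, rfl⟩ : ∃ s, i = j + s := by
    refine Nat.exists_eq_add_of_le (not_lt.mp fun hij => ?_)
    obtain ⟨r, rfl⟩ := Nat.exists_eq_add_of_lt hij
    refine hw.elim (by omega) fun h3w => h3w ⟨n * 3 ^ r, ?_⟩
    apply mul_right_cancel₀ (pow_ne_zero i (three_ne_zero (α := ℤ)))
    rw [h]
    ring
  refine ⟨s, rfl, mul_right_cancel₀ h3 ?_⟩
  rw [← h]
  ring

theorem exists_odd_mul_two_pow_of_div_pow_three_mem_Z38 {w : ℤ} {j : ℕ}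
    (hw : j = 0 ∨ ¬ 3 ∣ w) (h : (w : ℝ) / 3 ^ j ∈ Z38) :
    ∃ (k : ℕ) (m : ℤ), j ≤ k + 1 ∧ Odd m ∧ w = m * 2 ^ (3 * k + 1) := by
  obtain ⟨k, m, hm, heq⟩ := exists_of_mem_Z38 h
  rw [div_eq_div_iff (by positivity) (by positivity)] at heq
  obtain ⟨s, hks, hs⟩ := exists_eq_add_and_eq_mul_pow_three hw
    (by exact_mod_cast heq : w * 3 ^ (k + 1) = m * 2 ^ (3 * k + 1) * 3 ^ j)
  have hcop : IsCoprime ((2 : ℤ) ^ (3 * k + 1)) (3 ^ s) :=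
    IsCoprime.pow (Int.isCoprime_iff_gcd_eq_one.mpr rfl)
  obtain ⟨m', rfl⟩ : 2 ^ (3 * k + 1) ∣ w :=
    hcop.dvd_of_dvd_mul_right ⟨m, by rw [← hs]; ring⟩
  have hmm' : m = m' * 3 ^ s :=
    mul_left_cancel₀ (pow_ne_zero (3 * k + 1) two_ne_zero) (by linear_combination hs)
  refine ⟨k, m', by omega, (Int.odd_mul.mp (hmm' ▸ hm)).1, mul_comm _ _⟩

-- the integers of 2-adic valuation `≡ 1 mod 3`
def Z38Int : Set ℤ := {w | ∃ (k : ℕ) (m : ℤ), Odd m ∧ w = m * 2 ^ (3 * k + 1)}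

theorem zero_notMem_Z38Int : (0 : ℤ) ∉ Z38Int := by
  rintro ⟨k, m, hm, h⟩
  obtain rfl : m = 0 := by simpa using h.symm
  exact Int.not_odd_zero hm

theorem notMem_Z38Int_of_odd {w : ℤ} (hw : Odd w) : w ∉ Z38Int := by
  rintro ⟨k, m, -, rfl⟩
  exact Int.not_even_iff_odd.mpr hw ⟨m * 2 ^ (3 * k), by ring⟩

theorem two_pow_three_mul_succ_add_one (k : ℕ) :
    (2 : ℤ) ^ (3 * (k + 1) + 1) = 8 * 2 ^ (3 * k + 1) := by
  ring

theorem notMem_Z38Int_of_emod_eight_eq_four {w : ℤ} (hw : w % 8 = 4) : w ∉ Z38Int := by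
  rintro ⟨_ | k, m, hm, rfl⟩
  · obtain ⟨r, rfl⟩ := hm
    omega
  · rw [two_pow_three_mul_succ_add_one, mul_left_comm, Int.mul_emod_right] at hw
    omega

theorem mem_Z38Int_of_eight_mul_mem {w : ℤ} (hw : 8 * w ∈ Z38Int) : w ∈ Z38Int := by
  obtain ⟨_ | k, m, hm, h⟩ := hw
  · obtain ⟨r, rfl⟩ := hm
    simp only [mul_zero, zero_add, pow_one] at h
    exact ⟨0, 2 * r + 1, ⟨r, rfl⟩, by omega⟩
  · rw [two_pow_three_mul_succ_add_one] at h
    exact ⟨k, m, hm, by linarith⟩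

theorem exists_mem_Gamma8_sub_mul_notMem_Z38Int {c : ℤ} (hc : Odd c) (hc7 : |c| < 7) (u : ℤ) :
    ∃ g : ℤ, (g : ℝ) ∈ Gamma8 ∧ u - c * g ∉ Z38Int := by
  induction hn : u.natAbs using Nat.strong_induction_on generalizing u with
  | _ n ih =>
  obtain ⟨r, rfl⟩ := hc
  have hc7' := abs_lt.mp hc7
  by_cases hdone : ∃ d : ℤ, (d = 0 ∨ d = 2) ∧
      (u - (2 * r + 1) * d = 0 ∨ Odd (u - (2 * r + 1) * d) ∨ (u - (2 * r + 1) * d) % 8 = 4)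
  · obtain ⟨d, hd, hw⟩ := hdone
    have hdΓ : (d : ℝ) ∈ Gamma8 := by
      simpa using add_eight_mul_mem_Gamma8 (d := d) (by exact_mod_cast hd) zero_mem_Gamma8
    refine ⟨d, hdΓ, ?_⟩
    rcases hw with hw | hw | hw
    · exact hw ▸ zero_notMem_Z38Int
    · exact notMem_Z38Int_of_odd hw
    · exact notMem_Z38Int_of_emod_eight_eq_four hw
  push Not at hdone
  simp only [Int.not_odd_iff_even, Int.even_iff] at hdone
  -- the residues of `u` and `u - 2c` mod 8 left over force `8 ∣ u` or `8 ∣ u - 2c`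
  obtain ⟨d, hd, v, hv, hvn⟩ : ∃ d : ℤ, (d = 0 ∨ d = 2) ∧
      ∃ v : ℤ, u - (2 * r + 1) * d = 8 * v ∧ v.natAbs < n := by
    have h0 := hdone 0 (Or.inl rfl)
    have h2 := hdone 2 (Or.inr rfl)
    by_cases h8 : u % 8 = 0
    · exact ⟨0, Or.inl rfl, u / 8, by omega, by omega⟩
    · exact ⟨2, Or.inr rfl, (u - (2 * r + 1) * 2) / 8, by omega, by omega⟩
  obtain ⟨g, hg, hgood⟩ := ih _ hvn v rfl
  refine ⟨d + 8 * g, by push_cast; exact add_eight_mul_mem_Gamma8 (by exact_mod_cast hd) hg, ?_⟩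
  exact fun h => hgood (mem_Z38Int_of_eight_mul_mem (by convert h using 1; linarith))

theorem exists_sub_notMem_Z38_of_le_one {u : ℤ} {j : ℕ} (hj : j ≤ 1)
    (hu : j = 0 ∨ ¬ 3 ∣ u) :
    ∃ γ ∈ Gamma8, (u : ℝ) / 3 ^ j - γ ∉ Z38 := by
  have hc : Odd ((3 : ℤ) ^ j) := Odd.pow (by decide)
  have hc7 : |(3 : ℤ) ^ j| < 7 := by interval_cases j <;> norm_num
  obtain ⟨g, hg, hgood⟩ := exists_mem_Gamma8_sub_mul_notMem_Z38Int hc hc7 u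
  refine ⟨g, hg, fun h => hgood ?_⟩
  have hw : j = 0 ∨ ¬ 3 ∣ u - 3 ^ j * g := by
    obtain rfl | rfl : j = 0 ∨ j = 1 := by omega
    · exact Or.inl rfl
    · exact hu.imp_right fun h3 h3w => h3 (by simpa using h3w.add (dvd_mul_right 3 g))
  have hsub : (u : ℝ) / 3 ^ j - g = ((u - 3 ^ j * g : ℤ) : ℝ) / 3 ^ j := by
    push_cast
    field_simp
  obtain ⟨k, m, -, hm, hkm⟩ := exists_odd_mul_two_pow_of_div_pow_three_mem_Z38 hw (hsub ▸ h)
  exact ⟨k, m, hm, hkm⟩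

theorem four_dvd_of_div_pow_three_mem_Z38 {w : ℤ} {j : ℕ} (hj : 2 ≤ j) (hw : ¬ 3 ∣ w)
    (h : (w : ℝ) / 3 ^ j ∈ Z38) : 4 ∣ w := by
  obtain ⟨_ | k, m, hjk, -, rfl⟩ :=
    exists_odd_mul_two_pow_of_div_pow_three_mem_Z38 (Or.inr hw) h
  · omega
  · exact Dvd.dvd.mul_left ⟨2 ^ (3 * k + 2), by ring⟩ m

theorem exists_sub_notMem_Z38_of_two_le {u : ℤ} {j : ℕ} (hj : 2 ≤ j) (hu : ¬ 3 ∣ u) :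
    ∃ γ ∈ Gamma8, (u : ℝ) / 3 ^ j - γ ∉ Z38 := by
  by_cases h4 : 4 ∣ u
  · -- `u - 2 · 3^j ≡ 2 mod 4`
    have hΓ : (2 : ℝ) ∈ Gamma8 := by
      simpa using add_eight_mul_mem_Gamma8 (d := 2) (Or.inr rfl) zero_mem_Gamma8
    refine ⟨2, hΓ, fun h => ?_⟩
    have h3j : (3 : ℤ) ∣ 3 ^ j := dvd_pow_self 3 (by omega)
    have hodd : (3 : ℤ) ^ j % 2 = 1 := Int.odd_iff.mp (Odd.pow (by decide))
    have hsub : (u : ℝ) / 3 ^ j - 2 = ((u - 3 ^ j * 2 : ℤ) : ℝ) / 3 ^ j := by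
      push_cast
      field_simp
    have := four_dvd_of_div_pow_three_mem_Z38 hj (by omega) (hsub ▸ h)
    omega
  · refine ⟨0, zero_mem_Gamma8, fun h => h4 ?_⟩
    exact four_dvd_of_div_pow_three_mem_Z38 hj hu (by simpa using h)

theorem stmt16_general (t : ℝ) : ∃ γ ∈ Gamma8, t - γ ∉ Z38 := by
  by_cases ht : ∃ (j : ℕ) (u : ℤ), t = u / 3 ^ j
  · obtain ⟨j₀, u₀, rfl⟩ := ht
    obtain ⟨j, u, heq, hred⟩ := exists_div_pow_three_eq_and_not_three_dvd j₀ u₀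
    rw [heq]
    rcases le_or_gt j 1 with hj | hj
    · exact exists_sub_notMem_Z38_of_le_one hj hred
    · exact exists_sub_notMem_Z38_of_two_le hj (hred.resolve_left (by omega))
  · refine ⟨0, zero_mem_Gamma8, fun h => ht ?_⟩
    obtain ⟨k, m, -, hkm⟩ := exists_of_mem_Z38 (by simpa using h)
    exact ⟨k + 1, _, hkm⟩

theorem stmt16 (t : ℝ) (ht : t ∉ Gamma8) : ∃ γ ∈ Gamma8, t - γ ∉ Z38 :=
  stmt16_general t
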